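/- arXiv:1110.2773 — 2 statements merged into one kernel-verified Lean document; each statement's English description precedes it below -/
import Mathlib

section
/- Suppose a branch of a tree contains at most n designated 'blocking' nodes, the blocking nodes have pairwise distinct labels drawn from a set of size 2^p (so n ≤ 2^p), and between consecutive blocking nodes (and before the first and after the last) the number of nodes with any fixed label s is bounded by 2^{p^2} (respectively by 1 or 2^{p^2} − 1 in the boundary segments as in the case analysis). Then the total number of nodes on the branch with label equal to s is at most 2^p(2^{p^2} − 1) + 3. -/
/-- Branch-counting bound from the completeness proof: a branch is split by `n ≤ 2^p`
blocking nodes into `n+1` segments; `c i` counts the nodes with a fixed label `s` in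
segment `i`. With at most `1` such node before the first blocking node, at most
`2^(p^2)` in the last segment and in one exceptional middle segment, and at most
`2^(p^2) - 1` in every other middle segment, the total number of nodes with label `s`
is at most `2^p * (2^(p^2) - 1) + 3`. -/
theorem stmt10 (p n : ℕ) (c : ℕ → ℕ)
    (hn : n ≤ 2 ^ p)
    (h0 : c 0 ≤ 1)
    (hlast : c n ≤ 2 ^ (p ^ 2))
    (hmid : ∃ j : ℕ, c j ≤ 2 ^ (p ^ 2) ∧
      ∀ i, 0 < i → i < n → i ≠ j → c i ≤ 2 ^ (p ^ 2) - 1) :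
    ∑ i ∈ Finset.range (n + 1), c i ≤ 2 ^ p * (2 ^ (p ^ 2) - 1) + 3 := by
  obtain ⟨j, hj, hother⟩ := hmid
  set E := 2 ^ (p ^ 2) with hE
  have hE1 : 1 ≤ E := Nat.one_le_two_pow
  rcases Nat.eq_zero_or_pos n with rfl | hnpos
  · simpa using h0.trans (by omega)
  -- n ≥ 1
  have hsplit : ∑ i ∈ Finset.range (n + 1), c i
      = c 0 + ∑ i ∈ Finset.Ico 1 n, c i + c n := by
    rw [Finset.sum_range_succ, ← Finset.sum_range_add_sum_Ico c hnpos,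
      Finset.range_one, Finset.sum_singleton]
  have hmidsum : ∑ i ∈ Finset.Ico 1 n, c i
      ≤ ∑ i ∈ Finset.Ico 1 n, ((E - 1) + if i = j then 1 else 0) := by
    apply Finset.sum_le_sum
    intro i hi
    rw [Finset.mem_Ico] at hi
    by_cases hij : i = j
    · simp [hij]; omega
    · simp [hij]; exact hother i hi.1 hi.2 hij
  have hconst : ∑ i ∈ Finset.Ico 1 n, ((E - 1) + if i = j then 1 else 0)
      ≤ (n - 1) * (E - 1) + 1 := by
    rw [Finset.sum_add_distrib, Finset.sum_const, Finset.sum_ite_eq' _ j]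
    simp [Nat.card_Ico]
    split <;> omega
  have hnE : (n - 1) * (E - 1) + E ≤ n * (E - 1) + 1 := by
    have : (n - 1) * (E - 1) + (E - 1) = n * (E - 1) := by
      rw [← Nat.succ_pred_eq_of_pos hnpos, Nat.succ_mul]; simp
    omega
  have hnle : n * (E - 1) ≤ 2 ^ p * (E - 1) := Nat.mul_le_mul_right _ hn
  calc ∑ i ∈ Finset.range (n + 1), c i
      = c 0 + ∑ i ∈ Finset.Ico 1 n, c i + c n := hsplit
    _ ≤ 1 + ((n - 1) * (E - 1) + 1) + E := by
        have := hmidsum.trans hconst; omega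
    _ ≤ 2 ^ p * (E - 1) + 3 := by omega
end

section
/- Let t be a labeled tree with labels in a finite set and suppose on some branch there exist nodes u <_T v with t(u) = t(v). Define the collapse operation replacing the subtree at u by the subtree at v (relabeling nodes consistently with the naming scheme of u's position). Then the resulting structure is again a prefix-closed labeled tree, its set of nodes is a strict subset (in cardinality) of the original when u ≠ v and T[u] \ T[v] is nonempty, and every node of the new tree has a unique counterpart node in the old tree with the same label. -/
/-- Replacing the subtree at `u` by the subtree at `v` (renaming nodes to `u`'s position). -/
def collapseTree (T : Set (List ℕ)) (u v : List ℕ) : Set (List ℕ) :=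
  {x | x ∈ T ∧ ¬ u <+: x} ∪ {x | ∃ s : List ℕ, x = u ++ s ∧ v ++ s ∈ T}

/-- The counterpart in the original tree of a node of the collapsed tree. -/
def counterpart (u v x : List ℕ) : List ℕ :=
  if u <+: x then v ++ x.drop u.length else x

/-!
Nodes outside `T[u]` are kept and are their own counterparts, while `u ++ s` has counterpart
`v ++ s`. As `u <+: v`, the two kinds of counterparts lie outside and inside `T[u]` respectively,
so `counterpart` is injective on the collapsed tree. Its image misses every node of
`T[u] \ T[v]`, hence the collapsed tree is strictly smaller.
-/

section

variable {T : Set (List ℕ)} {u v : List ℕ}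

lemma counterpart_append (u v s : List ℕ) : counterpart u v (u ++ s) = v ++ s := by
  simp [counterpart]

lemma counterpart_of_not_prefix {x : List ℕ} (h : ¬ u <+: x) : counterpart u v x = x := by
  simp [counterpart, h]

lemma counterpart_mem_of_mem_collapseTree {x : List ℕ} (hx : x ∈ collapseTree T u v) :
    counterpart u v x ∈ T := by
  rcases hx with ⟨hxT, hux⟩ | ⟨s, rfl, hs⟩
  · rwa [counterpart_of_not_prefix hux]
  · rwa [counterpart_append]

lemma counterpart_ne_of_prefix_of_not_prefix {w : List ℕ} (huw : u <+: w) (hvw : ¬ v <+: w)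
    (x : List ℕ) :
    counterpart u v x ≠ w := by
  by_cases hux : u <+: x
  · obtain ⟨s, rfl⟩ := hux
    rw [counterpart_append]
    rintro rfl
    exact hvw (List.prefix_append v s)
  · rw [counterpart_of_not_prefix hux]
    rintro rfl
    exact hux huw

lemma injOn_counterpart_collapseTree (huv : u <+: v) :
    Set.InjOn (counterpart u v) (collapseTree T u v) := by
  have mixed : ∀ {x s}, ¬ u <+: x → counterpart u v x ≠ counterpart u v (u ++ s) := by
    intro x s hux hxs
    rw [counterpart_of_not_prefix hux, counterpart_append] at hxs
    exact hux (hxs ▸ huv.trans (List.prefix_append v s))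
  rintro x (⟨-, hux⟩ | ⟨s, rfl, -⟩) y (⟨-, huy⟩ | ⟨t, rfl, -⟩) hxy
  · rwa [counterpart_of_not_prefix hux, counterpart_of_not_prefix huy] at hxy
  · exact absurd hxy (mixed hux)
  · exact absurd hxy.symm (mixed huy)
  · rw [counterpart_append, counterpart_append, List.append_cancel_left_eq] at hxy
    rw [hxy]

lemma collapseTree_prefixClosed (hpref : ∀ x y : List ℕ, x <+: y → y ∈ T → x ∈ T)
    (hu : u ∈ T) :
    ∀ x y : List ℕ, x <+: y → y ∈ collapseTree T u v → x ∈ collapseTree T u v := by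
  rintro x y hxy (⟨hyT, huy⟩ | ⟨s, rfl, hs⟩)
  · exact Or.inl ⟨hpref x y hxy hyT, fun hux => huy (hux.trans hxy)⟩
  · by_cases hux : u <+: x
    · obtain ⟨t, rfl⟩ := hux
      rw [List.prefix_append_right_inj] at hxy
      exact Or.inr ⟨t, rfl, hpref _ _ ((List.prefix_append_right_inj v).mpr hxy) hs⟩
    · have hxu : x <+: u :=
        (List.prefix_or_prefix_of_prefix hxy (List.prefix_append u s)).resolve_right hux
      exact Or.inl ⟨hpref x u hxu hu, hux⟩

lemma ncard_collapseTree_lt (hfin : T.Finite) (huv : u <+: v)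
    (hdiff : ∃ w ∈ T, u <+: w ∧ ¬ v <+: w) :
    (collapseTree T u v).ncard < T.ncard := by
  obtain ⟨w, hwT, huw, hvw⟩ := hdiff
  have himage : counterpart u v '' collapseTree T u v ⊂ T :=
    (Set.ssubset_iff_of_subset
      (Set.image_subset_iff.mpr fun _ => counterpart_mem_of_mem_collapseTree)).mpr
      ⟨w, hwT, fun ⟨x, _, hx⟩ => counterpart_ne_of_prefix_of_not_prefix huw hvw x hx⟩
  calc (collapseTree T u v).ncard
      = (counterpart u v '' collapseTree T u v).ncard :=
        (injOn_counterpart_collapseTree huv).ncard_image.symm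
    _ < T.ncard := Set.ncard_lt_ncard himage hfin

end

theorem stmt12_general (T : Set (List ℕ))
    (hfin : T.Finite)
    (hpref : ∀ x y : List ℕ, x <+: y → y ∈ T → x ∈ T)
    (u v : List ℕ) (hu : u ∈ T) (huv : u <+: v)
    (hdiff : ∃ w ∈ T, u <+: w ∧ ¬ v <+: w) :
    (∀ x y : List ℕ, x <+: y → y ∈ collapseTree T u v → x ∈ collapseTree T u v) ∧
    (collapseTree T u v).ncard < T.ncard ∧
    (∀ x ∈ collapseTree T u v, counterpart u v x ∈ T ∧
      ∃! y : List ℕ, y ∈ T ∧ y = counterpart u v x) :=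
  ⟨collapseTree_prefixClosed hpref hu, ncard_collapseTree_lt hfin huv hdiff,
    fun _ hx =>
      have hcT := counterpart_mem_of_mem_collapseTree hx
      ⟨hcT, _, ⟨hcT, rfl⟩, fun _ hy => hy.2⟩⟩

/-- Well-definedness of the collapse operation: for `u <_T v` with equal labels, the
collapsed structure is again a prefix-closed tree, it has strictly fewer nodes when
`T[u] \ T[v]` is nonempty, and every node of the new tree has a unique counterpart
node in the old tree. -/
theorem stmt12 {Λ : Type*} [Fintype Λ] (T : Set (List ℕ)) (ℓ : List ℕ → Λ)
    (hfin : T.Finite)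
    (hpref : ∀ x y : List ℕ, x <+: y → y ∈ T → x ∈ T)
    (u v : List ℕ) (hu : u ∈ T) (hv : v ∈ T) (huv : u <+: v) (hne : u ≠ v)
    (hlab : ℓ u = ℓ v)
    (hdiff : ∃ w ∈ T, u <+: w ∧ ¬ v <+: w) :
    (∀ x y : List ℕ, x <+: y → y ∈ collapseTree T u v → x ∈ collapseTree T u v) ∧
    (collapseTree T u v).ncard < T.ncard ∧
    (∀ x ∈ collapseTree T u v, counterpart u v x ∈ T ∧
      ∃! y : List ℕ, y ∈ T ∧ y = counterpart u v x) :=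
  stmt12_general T hfin hpref u v hu huv hdiff
end
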